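/- The contravariant McLenaghan–Tariq–Tupper metric is obtained from the invariant frame: for every x ∈ ℝ⁴, the matrix h^{ij}(x) := Σ_{k,l} 𝐆^{kl} ξ_k^i(x) ξ_l^j(x) satisfies Σ_j h^{ij}(x) g_{jm}(x) = δ^i_m for all i, m ∈ {1,2,3,4}; i.e. h(x) is the inverse matrix of g(x) at every point. -/

import Mathlib

/-! Stack the invariant vector fields as the rows of a matrix `Ξ`. The frame is orthonormal for
the constant matrix `𝐆`, i.e. `Ξ g Ξᵀ = 𝐆`, so `𝐆⁻¹ Ξ g` is a left, hence two-sided, inverse of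
`Ξᵀ`; this is `Ξᵀ 𝐆⁻¹ Ξ g = 1`, the claimed identity `h g = 1`. -/
/-- The McLenaghan–Tariq–Tupper metric components `g_{ij}(x)` (indices `0,…,3` for `1,…,4`). -/
noncomputable def mttMetric (k : ℝ) (x : Fin 4 → ℝ) : Matrix (Fin 4) (Fin 4) ℝ :=
  !![1, 1, 0, -k * x 2;
     1, 0, 0, -k * x 2;
     0, 0, -Real.exp (-(k * x 1)), 0;
     -k * x 2, -k * x 2, 0, k ^ 2 * (x 2) ^ 2 - Real.exp (k * x 1)]
/-- The invariant vector fields `ξ₁,…,ξ₄` (indices `0,…,3`). -/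
noncomputable def ξ (k : ℝ) (i : Fin 4) (x : Fin 4 → ℝ) : Fin 4 → ℝ :=
  ![![-1, 0, 0, 0],
    ![-k * x 2 * Real.exp (-(k * x 1) / 2), 0, 0, -Real.exp (-(k * x 1) / 2)],
    ![0, 0, -Real.exp (k * x 1 / 2), 0],
    ![2, -1, 0, 0]] i

/-- The constant matrix `𝐆^{kl}` (the inverse of `𝐆`) with nonzero entries
`𝐆^{14} = 𝐆^{41} = −1`, `𝐆^{22} = −1`, `𝐆^{33} = −1`, `𝐆^{44} = −1`. -/
def GmatInv : Matrix (Fin 4) (Fin 4) ℝ :=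
  !![0, 0, 0, -1;
     0, -1, 0, 0;
     0, 0, -1, 0;
     -1, 0, 0, -1]

namespace Matrix

variable {R n : Type*} [CommRing R] [Fintype n]

theorem transpose_mul_mul_mul_eq_one [DecidableEq n] {Ξ g C : Matrix n n R}
    (h : C * (Ξ * g * Ξᵀ) = 1) :
    Ξᵀ * C * Ξ * g = 1 := by
  have hleft : (C * Ξ * g) * Ξᵀ = 1 := by simpa only [Matrix.mul_assoc] using h
  simpa only [Matrix.mul_assoc] using mul_eq_one_comm.mp hleft

theorem transpose_mul_mul_apply (Ξ C : Matrix n n R) (i j : n) :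
    (Ξᵀ * C * Ξ) i j = ∑ a, ∑ b, C a b * Ξ a i * Ξ b j := by
  simp only [mul_apply, transpose_apply, Finset.sum_mul]
  rw [Finset.sum_comm]
  exact Finset.sum_congr rfl fun _ _ => Finset.sum_congr rfl fun _ _ => by ring

end Matrix

open scoped Matrix

noncomputable def mttFrame (k : ℝ) (x : Fin 4 → ℝ) : Matrix (Fin 4) (Fin 4) ℝ :=
  Matrix.of fun a i => ξ k a x i

def Gmat : Matrix (Fin 4) (Fin 4) ℝ :=
  !![1, 0, 0, -1;
     0, -1, 0, 0;
     0, 0, -1, 0;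
     -1, 0, 0, 0]

theorem GmatInv_mul_Gmat : GmatInv * Gmat = 1 := by
  ext a b
  fin_cases a <;> fin_cases b <;> simp [GmatInv, Gmat, Matrix.mul_apply, Fin.sum_univ_four]

theorem mttFrame_mul_mttMetric_mul_transpose (k : ℝ) (x : Fin 4 → ℝ) :
    mttFrame k x * mttMetric k x * (mttFrame k x)ᵀ = Gmat := by
  set E := Real.exp (k * x 1 / 2)
  have hE : E ≠ 0 := (Real.exp_pos _).ne'
  have hexp : Real.exp (k * x 1) = E ^ 2 := by
    rw [← Real.exp_nat_mul]; ring_nf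
  have hexp_neg : Real.exp (-(k * x 1)) = (E ^ 2)⁻¹ := by rw [Real.exp_neg, hexp]
  have hexp_neg_half : Real.exp (-(k * x 1) / 2) = E⁻¹ := by rw [neg_div, Real.exp_neg]
  ext a b
  fin_cases a <;> fin_cases b <;>
    simp [mttFrame, mttMetric, ξ, Gmat, Matrix.mul_apply, Fin.sum_univ_four, hexp, hexp_neg,
      hexp_neg_half] <;>
    field_simp <;> ring

theorem contravariant_metric_frame_general (k : ℝ) (x : Fin 4 → ℝ) (i m : Fin 4) :
    ∑ j : Fin 4,
      (∑ a : Fin 4, ∑ b : Fin 4, GmatInv a b * ξ k a x i * ξ k b x j) * mttMetric k x j m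
      = if i = m then (1 : ℝ) else 0 := by
  have hinv : (mttFrame k x)ᵀ * GmatInv * mttFrame k x * mttMetric k x = 1 :=
    Matrix.transpose_mul_mul_mul_eq_one
      (by rw [mttFrame_mul_mttMetric_mul_transpose, GmatInv_mul_Gmat])
  have hentry := congrFun (congrFun hinv i) m
  rw [Matrix.mul_apply, Matrix.one_apply] at hentry
  simpa only [Matrix.transpose_mul_mul_apply, mttFrame, Matrix.of_apply] using hentry

/-- The contravariant metric is obtained from the invariant frame:
`h^{ij}(x) = Σ_{k,l} 𝐆^{kl} ξ_k^i(x) ξ_l^j(x)` is the inverse matrix of `g(x)` at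
every point: `Σ_j h^{ij}(x) g_{jm}(x) = δ^i_m`. -/
theorem contravariant_metric_frame (k : ℝ) (hk : 0 < k) (x : Fin 4 → ℝ) (i m : Fin 4) :
    ∑ j : Fin 4,
      (∑ a : Fin 4, ∑ b : Fin 4, GmatInv a b * ξ k a x i * ξ k b x j) * mttMetric k x j m
      = if i = m then (1 : ℝ) else 0 :=
  contravariant_metric_frame_general k x i m
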